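/- Let (γ_k)_{k≥0} be a nonnegative sequence with tail sums ∑_{k=l}^∞ γ_k = O(l^{−ν}) for some ν > 0 and ∑_{k=0}^∞ γ_k < ∞. Then for any sequence a_n → 0⁺, ∑_{k=0}^∞ (γ_k ∧ a_n) = O(a_n^{ν/(1+ν)}). -/

import Mathlib

/-!
Splitting the sum at an index `l`, the first `l` terms are at most `a` each and the remaining
ones are at most the tail `∑_{k ≥ l} γ_k ≤ C l^{-ν}`. The two contributions `l a` and `C l^{-ν}`
balance at `l ≈ a^{-1/(1+ν)}`, where both are of order `a^{ν/(1+ν)}`.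
-/

open Filter

lemma abs_min_le_abs_of_nonneg {x a : ℝ} (ha : 0 ≤ a) : |min x a| ≤ |x| :=
  abs_le.mpr ⟨le_min (neg_abs_le x) (by linarith [abs_nonneg x]),
    (min_le_left _ _).trans (le_abs_self x)⟩

lemma Summable.min_const {γ : ℕ → ℝ} (hγ : Summable γ) {a : ℝ} (ha : 0 ≤ a) :
    Summable fun k => min (γ k) a :=
  hγ.abs.of_norm_bounded fun _ => abs_min_le_abs_of_nonneg ha

lemma tsum_min_const_le_mul_add_tsum_nat_add {γ : ℕ → ℝ} (hγ : Summable γ) {a : ℝ} (ha : 0 ≤ a)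
    (l : ℕ) : ∑' k, min (γ k) a ≤ l * a + ∑' k, γ (l + k) := by
  have hmin := hγ.min_const ha
  have hhead : ∑ k ∈ Finset.range l, min (γ k) a ≤ l * a := by
    simpa using Finset.sum_le_sum fun k (_ : k ∈ Finset.range l) => min_le_right (γ k) a
  have htail : ∑' k, min (γ (k + l)) a ≤ ∑' k, γ (l + k) := by
    refine Summable.tsum_le_tsum (fun k => ?_) ((summable_nat_add_iff l).mpr hmin) ?_
    · rw [add_comm l k]
      exact min_le_left _ _
    · simpa only [add_comm l] using (summable_nat_add_iff l).mpr hγ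
  rw [← hmin.sum_add_tsum_nat_add l]
  exact add_le_add hhead htail

lemma rpow_neg_inv_one_add_mul_self {a ν : ℝ} (ha : 0 < a) (hν : 1 + ν ≠ 0) :
    a ^ (-(1 + ν)⁻¹) * a = a ^ (ν / (1 + ν)) := by
  rw [← Real.rpow_add_one ha.ne']
  congr 1
  field_simp
  ring

lemma rpow_neg_inv_one_add_rpow_neg {a ν : ℝ} (ha : 0 < a) (hν : 1 + ν ≠ 0) :
    (a ^ (-(1 + ν)⁻¹)) ^ (-ν) = a ^ (ν / (1 + ν)) := by
  rw [← Real.rpow_mul ha.le]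
  congr 1
  field_simp

lemma tsum_min_const_le_rpow {γ : ℕ → ℝ} (hγ : Summable γ) {ν C : ℝ} (hν : 0 < ν) (hC : 0 ≤ C)
    (htail : ∀ l : ℕ, 1 ≤ l → ∑' k, γ (l + k) ≤ C * (l : ℝ) ^ (-ν))
    {a : ℝ} (ha : 0 < a) (ha1 : a ≤ 1) :
    ∑' k, min (γ k) a ≤ (2 + C) * a ^ (ν / (1 + ν)) := by
  set r := a ^ (-(1 + ν)⁻¹)
  have hr : 1 ≤ r := Real.one_le_rpow_of_pos_of_le_one_of_nonpos ha ha1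
    (neg_nonpos.mpr (by positivity))
  have hl : 1 ≤ ⌈r⌉₊ := Nat.one_le_ceil_iff.mpr (by linarith)
  calc ∑' k, min (γ k) a
      ≤ ⌈r⌉₊ * a + ∑' k, γ (⌈r⌉₊ + k) := tsum_min_const_le_mul_add_tsum_nat_add hγ ha.le _
    _ ≤ 2 * r * a + C * r ^ (-ν) := by
        gcongr
        · exact Nat.ceil_le_two_mul (by linarith)
        · exact (htail _ hl).trans <| mul_le_mul_of_nonneg_left
            (Real.rpow_le_rpow_of_nonpos (by linarith) (Nat.le_ceil r) (by linarith)) hC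
    _ = (2 + C) * a ^ (ν / (1 + ν)) := by
        have hν' : 1 + ν ≠ 0 := by positivity
        rw [mul_assoc, rpow_neg_inv_one_add_mul_self ha hν', rpow_neg_inv_one_add_rpow_neg ha hν']
        ring

theorem stmt_11_general (γ : ℕ → ℝ) (ν : ℝ) (hν : 0 < ν)
    (hsum : Summable γ)
    (htail : ∃ C : ℝ, ∀ l : ℕ, 1 ≤ l → (∑' k : ℕ, γ (l + k)) ≤ C * (l : ℝ) ^ (-ν))
    (a : ℕ → ℝ) (ha0 : ∀ n, 0 < a n) (halim : Tendsto a atTop (nhds 0)) :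
    ∃ C' > 0, ∀ᶠ n in atTop,
      (∑' k : ℕ, min (γ k) (a n)) ≤ C' * a n ^ (ν / (1 + ν)) := by
  obtain ⟨C, hC⟩ := htail
  have hC' : ∀ l : ℕ, 1 ≤ l → ∑' k, γ (l + k) ≤ max C 0 * (l : ℝ) ^ (-ν) := fun l hl =>
    (hC l hl).trans (by gcongr; exact le_max_left C 0)
  refine ⟨2 + max C 0, by positivity, ?_⟩
  filter_upwards [halim.eventually_lt_const one_pos] with n han
  exact tsum_min_const_le_rpow hsum hν (le_max_right C 0) hC' (ha0 n) han.le

/-- Truncation lemma (from the proof of Lemma A.4): if `(γ_k)` is nonnegative,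
summable, with tail sums `∑_{k=l}^∞ γ_k ≤ C l^{−ν}` for all `l ≥ 1`, then for any
sequence `a_n → 0` with `a_n > 0`, `∑_{k=0}^∞ (γ_k ∧ a_n) = O(a_n^{ν/(1+ν)})`. -/
theorem stmt_11 (γ : ℕ → ℝ) (ν : ℝ) (hν : 0 < ν)
    (hpos : ∀ k, 0 ≤ γ k) (hsum : Summable γ)
    (htail : ∃ C : ℝ, ∀ l : ℕ, 1 ≤ l → (∑' k : ℕ, γ (l + k)) ≤ C * (l : ℝ) ^ (-ν))
    (a : ℕ → ℝ) (ha0 : ∀ n, 0 < a n) (halim : Tendsto a atTop (nhds 0)) :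
    ∃ C' > 0, ∀ᶠ n in atTop,
      (∑' k : ℕ, min (γ k) (a n)) ≤ C' * a n ^ (ν / (1 + ν)) :=
  stmt_11_general γ ν hν hsum htail a ha0 halim
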